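/- Let G be a labelled acyclic directed multigraph, X a nonempty proper subset of V(G), Y = V(G)\setminus X. Suppose: (i) for each label \ell, the set of all arcs of [X,Y] with label \ell arc-induces a complete bipartite subgraph of G; (ii) the arcs of G/X and G/Y corresponding to the arcs of [X,Y] are the only synchronising arcs of G/X and G/Y (i.e., a label occurs in both G/X and G/Y only on arcs coming from [X,Y]); (iii) every vertex of in-degree 0 of G lies in X; (iv) [X,Y] has no backward arcs. Then G is isomorphic to (G/Y) \boxbackslash (G/X), via the map sending v in X to (v, \tilde{x}) and w in Y to (\tilde{y}, w). -/

import Mathlib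

/-- A labelled directed multigraph: vertex type `V`, arc type `A`, label type `L`,
incidence function `mu` giving (tail, head), and arc labelling `lab`. -/
structure LDMG (V A L : Type) where
  mu : A → V × V
  lab : A → L

namespace LDMG

variable {V A L V' A' : Type}

/-- The one-step arc relation. -/
def step (G : LDMG V A L) (u v : V) : Prop := ∃ a, G.mu a = (u, v)

/-- `G` is acyclic: no directed cycle. -/
def Acyclic (G : LDMG V A L) : Prop := ∀ v, ¬ Relation.TransGen G.step v v

/-- `v` has in-degree 0 in `G`. -/
def InDegZero (G : LDMG V A L) (v : V) : Prop := ∀ a, (G.mu a).2 ≠ v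

/-- `v` has out-degree 0 in `G`. -/
def OutDegZero (G : LDMG V A L) (v : V) : Prop := ∀ a, (G.mu a).1 ≠ v

/-- `peel G n`: the set of vertices deleted after `n` rounds of repeatedly removing the
vertices of in-degree 0 (together with the arcs with tails there). -/
def peel (G : LDMG V A L) : ℕ → Set V
  | 0 => ∅
  | n + 1 => peel G n ∪ {v | ∀ a, (G.mu a).2 = v → (G.mu a).1 ∈ peel G n}

/-- The level set `S^n(G)`. -/
def levelSet (G : LDMG V A L) (n : ℕ) : Set V := peel G (n + 1) \ peel G n

/-- Vertex type of the contraction `G/X`: the vertices outside `X` together with one new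
vertex (`Sum.inr ()`) replacing `X`. -/
def CVertex (X : Set V) : Type := {v : V // v ∉ X} ⊕ Unit

/-- Canonical projection of vertices to contraction vertices. -/
noncomputable def cMap (X : Set V) (v : V) : CVertex X :=
  haveI := Classical.propDecidable (v ∈ X)
  if h : v ∈ X then Sum.inr () else Sum.inl ⟨v, h⟩

/-- The arcs of `G` surviving the contraction of `X` (i.e. not having both ends in `X`),
before identification of parallel equally-labelled arcs. -/
def CPre (G : LDMG V A L) (X : Set V) : Type :=
  {a : A // ¬ ((G.mu a).1 ∈ X ∧ (G.mu a).2 ∈ X)}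

noncomputable def cKey (G : LDMG V A L) (X : Set V) (a : CPre G X) :
    (CVertex X × CVertex X) × L :=
  ((cMap X (G.mu a.1).1, cMap X (G.mu a.1).2), G.lab a.1)

/-- Arc type of `G/X`: surviving arcs, with arcs having identical tail, head and label
identified. -/
def CArc (G : LDMG V A L) (X : Set V) : Type :=
  Quotient (Setoid.ker (cKey G X))

/-- The contraction `G/X`. -/
noncomputable def contract (G : LDMG V A L) (X : Set V) : LDMG (CVertex X) (CArc G X) L where
  mu := Quotient.lift (fun a => (cKey G X a).1) (fun _ _ h => congrArg Prod.fst h)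
  lab := Quotient.lift (fun a => (cKey G X a).2) (fun _ _ h => congrArg Prod.snd h)

/-- The Cartesian product `G □ H`. -/
def box (G : LDMG V A L) (H : LDMG V' A' L) : LDMG (V × V') (A × V' ⊕ V × A') L where
  mu := fun x =>
    match x with
    | Sum.inl (a, w) => (((G.mu a).1, w), ((G.mu a).2, w))
    | Sum.inr (u, b) => ((u, (H.mu b).1), (u, (H.mu b).2))
  lab := fun x =>
    match x with
    | Sum.inl (a, _) => G.lab a
    | Sum.inr (_, b) => H.lab b

/-- The label `ℓ` occurs in `G`. -/
def HasLab (G : LDMG V A L) (ℓ : L) : Prop := ∃ a, G.lab a = ℓ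

/-- Arc type of the intermediate product `G ⊠ H`: asynchronous copies of arcs of `G`
(whose label does not occur in `H`), asynchronous copies of arcs of `H` (whose label
does not occur in `G`), and synchronous arcs for pairs of equally labelled arcs. -/
def InterArc (G : LDMG V A L) (H : LDMG V' A' L) : Type :=
  {p : A × V' // ¬ H.HasLab (G.lab p.1)} ⊕
  {p : V × A' // ¬ G.HasLab (H.lab p.2)} ⊕
  {p : A × A' // G.lab p.1 = H.lab p.2}

/-- The intermediate product `G ⊠ H`. -/
def inter (G : LDMG V A L) (H : LDMG V' A' L) : LDMG (V × V') (InterArc G H) L where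
  mu := fun x =>
    match x with
    | Sum.inl ⟨(a, w), _⟩ => (((G.mu a).1, w), ((G.mu a).2, w))
    | Sum.inr (Sum.inl ⟨(u, b), _⟩) => ((u, (H.mu b).1), (u, (H.mu b).2))
    | Sum.inr (Sum.inr ⟨(a, b), _⟩) => (((G.mu a).1, (H.mu b).1), ((G.mu a).2, (H.mu b).2))
  lab := fun x =>
    match x with
    | Sum.inl ⟨(a, _), _⟩ => G.lab a
    | Sum.inr (Sum.inl ⟨(_, b), _⟩) => H.lab b
    | Sum.inr (Sum.inr ⟨(a, _), _⟩) => G.lab a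

/-- `v` has positive level in `G □ H`, i.e. some in-arc in the Cartesian product. -/
def PosLevelBox (G : LDMG V A L) (H : LDMG V' A' L) (v : V × V') : Prop :=
  ∃ x, ((G.box H).mu x).2 = v

/-- The set of vertices removed after `n` rounds of the VRSP removal process: repeatedly
remove the vertices having in-degree 0 in the current graph but positive level in `G □ H`
(together with their out-arcs). -/
def vrspRem (G : LDMG V A L) (H : LDMG V' A' L) : ℕ → Set (V × V')
  | 0 => ∅
  | n + 1 => vrspRem G H n ∪
      {v | PosLevelBox G H v ∧
        ∀ x, ((G.inter H).mu x).2 = v → ((G.inter H).mu x).1 ∈ vrspRem G H n}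

/-- All vertices eventually removed in the VRSP removal process. -/
def vrspRemoved (G : LDMG V A L) (H : LDMG V' A' L) : Set (V × V') := ⋃ n, vrspRem G H n

/-- Vertex type of the vertex-removing synchronised product `G ⊟ H`. -/
def VrspV (G : LDMG V A L) (H : LDMG V' A' L) : Type := {v : V × V' // v ∉ vrspRemoved G H}

/-- Arc type of `G ⊟ H`: arcs of `G ⊠ H` with both ends surviving. -/
def VrspArc (G : LDMG V A L) (H : LDMG V' A' L) : Type :=
  {x : InterArc G H // ((G.inter H).mu x).1 ∉ vrspRemoved G H ∧
    ((G.inter H).mu x).2 ∉ vrspRemoved G H}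

/-- The vertex-removing synchronised product `G ⊟ H`. -/
def vrsp (G : LDMG V A L) (H : LDMG V' A' L) : LDMG (VrspV G H) (VrspArc G H) L where
  mu := fun x => (⟨((G.inter H).mu x.1).1, x.2.1⟩, ⟨((G.inter H).mu x.1).2, x.2.2⟩)
  lab := fun x => (G.inter H).lab x.1

/-- Isomorphism of labelled directed multigraphs: a vertex bijection preserving the
existence of arcs together with their labels. -/
def Iso (G : LDMG V A L) {V' A' : Type} (H : LDMG V' A' L) : Prop :=
  ∃ φ : V ≃ V', ∀ u v ℓ,
    (∃ a, G.mu a = (u, v) ∧ G.lab a = ℓ) ↔ (∃ b, H.mu b = (φ u, φ v) ∧ H.lab b = ℓ)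

end LDMG

/-!
Write `Y = Xᶜ`. The factor `G/Y` keeps the arcs inside `X` and the crossing arcs, `G/X` those
inside `Y` and the crossing arcs. By (ii) an arc inside `X` (resp. `Y`) has a label foreign to
the other factor, so it moves `(u, x̃)` (resp. `(ỹ, u)`) asynchronously, whereas two crossing
arcs, forward by (iv), can only synchronise with each other; by (i) the synchronised pair
`(a, b)` is matched by the arc of `G` from the tail of `a` to the head of `b`. So the arcs of
`G` are exactly the arcs of `(G/Y) ⊠ (G/X)` between the vertices `(u, x̃)`, `(ỹ, w)`.

These vertices are never removed: by (iii) each one with an in-arc in `G/Y □ G/X` has an in-arc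
in `G`, hence in the product, coming from another such vertex. Every other vertex is removed:
`(ỹ, x̃)` has no arc of `(G/Y) ⊠ (G/X)` entering it, but one of `G/Y □ G/X` (a minimal vertex of
`Y` is entered from `X`), and a vertex `(u, w)`, `u ∈ X`, `w ∈ Y`, is only entered from vertices
`(u', w)`, `(u, w')` with `u' → u`, `w' → w` in `G`, so it falls by induction along the acyclic
`G`.
-/

namespace LDMG

variable {V A L V' A' : Type}

section Contraction

variable {X : Set V} {v w : V}

lemma cMap_of_mem (h : v ∈ X) : cMap X v = Sum.inr () := dif_pos h

lemma cMap_of_notMem (h : v ∉ X) : cMap X v = Sum.inl ⟨v, h⟩ := dif_neg h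

lemma cMap_eq_inr_iff : cMap X v = Sum.inr () ↔ v ∈ X := by
  refine ⟨fun h => ?_, cMap_of_mem⟩
  by_contra hv
  rw [cMap_of_notMem hv] at h
  cases h

lemma eq_of_cMap_eq_inl {s : {v : V // v ∉ X}} (h : cMap X v = Sum.inl s) : v = s.1 := by
  by_cases hv : v ∈ X
  · rw [cMap_of_mem hv] at h
    cases h
  · rw [cMap_of_notMem hv] at h
    cases h
    rfl

lemma eq_of_cMap_eq (h : cMap X v = cMap X w) (hv : v ∉ X) : v = w :=
  (eq_of_cMap_eq_inl (h.symm.trans (cMap_of_notMem hv))).symm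

instance [Finite V] (X : Set V) : Finite (CVertex X) :=
  inferInstanceAs (Finite ({v : V // v ∉ X} ⊕ Unit))

lemma hasLab_contract {G : LDMG V A L} {a : A} (h : ¬ ((G.mu a).1 ∈ X ∧ (G.mu a).2 ∈ X)) :
    (G.contract X).HasLab (G.lab a) :=
  ⟨Quotient.mk _ ⟨a, h⟩, rfl⟩

end Contraction

section Vrsp

variable (G : LDMG V A L) (H : LDMG V' A' L)

lemma vrspRem_mono : Monotone (vrspRem G H) :=
  monotone_nat_of_le_succ fun _ => Set.subset_union_left

lemma exists_vrspRemoved_subset_vrspRem [Finite V] [Finite V'] :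
    ∃ n, vrspRemoved G H ⊆ vrspRem G H n := by
  have h : ∀ p : vrspRemoved G H, ∀ᶠ n in Filter.atTop, p.1 ∈ vrspRem G H n := by
    rintro ⟨p, hp⟩
    obtain ⟨n, hn⟩ := Set.mem_iUnion.mp hp
    exact Filter.eventually_atTop.2 ⟨n, fun m hm => vrspRem_mono G H hm hn⟩
  obtain ⟨n, hn⟩ := (Filter.eventually_all.2 h).exists
  exact ⟨n, fun p hp => hn ⟨p, hp⟩⟩

variable {G H}

lemma mem_vrspRemoved_of_forall [Finite V] [Finite V'] {p : V × V'} (hpos : PosLevelBox G H p)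
    (hin : ∀ x, ((G.inter H).mu x).2 = p → ((G.inter H).mu x).1 ∈ vrspRemoved G H) :
    p ∈ vrspRemoved G H := by
  obtain ⟨n, hn⟩ := exists_vrspRemoved_subset_vrspRem G H
  exact Set.mem_iUnion.mpr ⟨n + 1, Or.inr ⟨hpos, fun x hx => hn (hin x hx)⟩⟩

lemma disjoint_vrspRemoved {S : Set (V × V')}
    (hS : ∀ p ∈ S, PosLevelBox G H p →
      ∃ x, ((G.inter H).mu x).2 = p ∧ ((G.inter H).mu x).1 ∈ S) :
    Disjoint S (vrspRemoved G H) := by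
  suffices h : ∀ n, ∀ p ∈ S, p ∉ vrspRem G H n from
    Set.disjoint_left.mpr fun p hp hrem =>
      let ⟨n, hn⟩ := Set.mem_iUnion.mp hrem; h n p hp hn
  intro n
  induction n with
  | zero => exact fun _ _ h => h
  | succ n ih =>
    rintro p hp (hrem | ⟨hpos, hin⟩)
    · exact ih p hp hrem
    · obtain ⟨x, hhead, htail⟩ := hS p hp hpos
      exact ih _ htail (hin x hhead)

lemma exists_vrsp_arc_iff {p q : V × V'} (hp : p ∉ vrspRemoved G H)
    (hq : q ∉ vrspRemoved G H) (ℓ : L) :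
    (∃ b, (G.vrsp H).mu b = (⟨p, hp⟩, ⟨q, hq⟩) ∧ (G.vrsp H).lab b = ℓ) ↔
      ∃ x, (G.inter H).mu x = (p, q) ∧ (G.inter H).lab x = ℓ := by
  constructor
  · rintro ⟨b, hx, hlab⟩
    exact ⟨b.1, Prod.ext (congrArg (·.1.1) hx) (congrArg (·.2.1) hx), hlab⟩
  · rintro ⟨x, hx, hlab⟩
    refine ⟨⟨x, by rw [hx]; exact ⟨hp, hq⟩⟩, ?_, hlab⟩
    exact Prod.ext (Subtype.ext (congrArg Prod.fst hx)) (Subtype.ext (congrArg Prod.snd hx))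

end Vrsp

lemma Acyclic.wellFounded [Finite V] {G : LDMG V A L} (h : G.Acyclic) : WellFounded G.step :=
  haveI : Std.Irrefl (Relation.TransGen G.step) := ⟨h⟩
  Subrelation.wf Relation.TransGen.single (Finite.wellFounded_of_trans_of_irrefl _)

section Decomposition

variable {G : LDMG V A L} {X : Set V}

def IsCrossing (G : LDMG V A L) (X : Set V) (a : A) : Prop :=
  ((G.mu a).1 ∈ X ∧ (G.mu a).2 ∈ Xᶜ) ∨ ((G.mu a).1 ∈ Xᶜ ∧ (G.mu a).2 ∈ X)

/-- Condition (ii) of the theorem, with `Y = Xᶜ`. -/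
def SyncOnlyAcross (G : LDMG V A L) (X : Set V) : Prop :=
  ∀ a b : A, ¬ ((G.mu a).1 ∈ X ∧ (G.mu a).2 ∈ X) → ¬ ((G.mu b).1 ∈ Xᶜ ∧ (G.mu b).2 ∈ Xᶜ) →
    G.lab a = G.lab b → G.IsCrossing X a ∧ G.IsCrossing X b

lemma IsCrossing.forward (hnoback : ∀ a, (G.mu a).2 ∈ X → (G.mu a).1 ∈ X) {a : A}
    (h : G.IsCrossing X a) : (G.mu a).1 ∈ X ∧ (G.mu a).2 ∉ X := by
  rcases h with h | ⟨h₁, h₂⟩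
  exacts [h, absurd (hnoback a h₂) h₁]

/-- The vertex of `(G/Xᶜ) ⊠ (G/X)` representing `v`: `(v, x̃)` if `v ∈ X`, `(ỹ, v)` otherwise. -/
noncomputable def embed (X : Set V) (v : V) : CVertex Xᶜ × CVertex X := (cMap Xᶜ v, cMap X v)

lemma embed_injective : Function.Injective (embed X) := by
  intro v w h
  by_cases hv : v ∈ X
  · exact eq_of_cMap_eq (congrArg Prod.fst h) (Set.notMem_compl_iff.mpr hv)
  · exact eq_of_cMap_eq (congrArg Prod.snd h) hv

lemma not_hasLab_contract_of_mem (hsync : SyncOnlyAcross G X) {a : A}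
    (h₁ : (G.mu a).1 ∈ X) (h₂ : (G.mu a).2 ∈ X) : ¬ (G.contract X).HasLab (G.lab a) := by
  rintro ⟨q, hq⟩
  obtain ⟨⟨b, hb⟩, rfl⟩ := Quotient.exists_rep q
  rcases (hsync b a hb (fun h => h.1 h₁) hq).2 with ⟨-, h⟩ | ⟨h, -⟩
  exacts [h h₂, h h₁]

lemma not_hasLab_contract_compl_of_notMem (hsync : SyncOnlyAcross G X) {a : A}
    (h₁ : (G.mu a).1 ∉ X) (h₂ : (G.mu a).2 ∉ X) : ¬ (G.contract Xᶜ).HasLab (G.lab a) := by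
  rintro ⟨q, hq⟩
  obtain ⟨⟨b, hb⟩, rfl⟩ := Quotient.exists_rep q
  rcases (hsync a b (fun h => h₁ h.1) hb hq.symm).1 with ⟨h, -⟩ | ⟨-, h⟩
  exacts [h₁ h, h₂ h]

lemma inter_arc_cases (hsync : SyncOnlyAcross G X) (hnoback : ∀ a, (G.mu a).2 ∈ X → (G.mu a).1 ∈ X)
    (x : InterArc (G.contract Xᶜ) (G.contract X)) :
    (∃ a u, (G.mu a).1 ∈ X ∧ (G.mu a).2 ∈ X ∧
      ((G.contract Xᶜ).inter (G.contract X)).mu x =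
        ((cMap Xᶜ (G.mu a).1, u), (cMap Xᶜ (G.mu a).2, u)) ∧
      ((G.contract Xᶜ).inter (G.contract X)).lab x = G.lab a) ∨
    (∃ a u, (G.mu a).1 ∉ X ∧ (G.mu a).2 ∉ X ∧
      ((G.contract Xᶜ).inter (G.contract X)).mu x =
        ((u, cMap X (G.mu a).1), (u, cMap X (G.mu a).2)) ∧
      ((G.contract Xᶜ).inter (G.contract X)).lab x = G.lab a) ∨
    (∃ a b, (G.mu a).1 ∈ X ∧ (G.mu a).2 ∉ X ∧ (G.mu b).1 ∈ X ∧ (G.mu b).2 ∉ X ∧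
      G.lab a = G.lab b ∧
      ((G.contract Xᶜ).inter (G.contract X)).mu x = (embed X (G.mu a).1, embed X (G.mu b).2) ∧
      ((G.contract Xᶜ).inter (G.contract X)).lab x = G.lab a) := by
  rcases x with ⟨⟨q, u⟩, hq⟩ | ⟨⟨u, q⟩, hq⟩ | ⟨⟨q, r⟩, hqr⟩
  · obtain ⟨⟨a, -⟩, rfl⟩ := Quotient.exists_rep q
    have ha : (G.mu a).1 ∈ X ∧ (G.mu a).2 ∈ X := not_not.mp (mt hasLab_contract hq)
    exact Or.inl ⟨a, u, ha.1, ha.2, rfl, rfl⟩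
  · obtain ⟨⟨a, -⟩, rfl⟩ := Quotient.exists_rep q
    have ha : (G.mu a).1 ∈ Xᶜ ∧ (G.mu a).2 ∈ Xᶜ := not_not.mp (mt hasLab_contract hq)
    exact Or.inr (Or.inl ⟨a, u, ha.1, ha.2, rfl, rfl⟩)
  · obtain ⟨⟨a, ha⟩, rfl⟩ := Quotient.exists_rep q
    obtain ⟨⟨b, hb⟩, rfl⟩ := Quotient.exists_rep r
    obtain ⟨hb₁, hb₂⟩ := (hsync b a hb ha hqr.symm).1.forward hnoback
    obtain ⟨ha₁, ha₂⟩ := (hsync b a hb ha hqr.symm).2.forward hnoback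
    refine Or.inr (Or.inr ⟨a, b, ha₁, ha₂, hb₁, hb₂, hqr, ?_, rfl⟩)
    show ((cMap Xᶜ (G.mu a).1, cMap X (G.mu b).1), (cMap Xᶜ (G.mu a).2, cMap X (G.mu b).2)) = _
    rw [embed, embed, cMap_of_mem hb₁, cMap_of_mem ha₁, cMap_of_mem (show (G.mu a).2 ∈ Xᶜ from ha₂),
      cMap_of_mem (show (G.mu b).2 ∈ Xᶜ from hb₂)]

lemma exists_arc_head_eq (hsource : ∀ v, G.InDegZero v → v ∈ X) {v : V} (hv : v ∉ X) :
    ∃ a, (G.mu a).2 = v := by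
  by_contra! h
  exact hv (hsource v h)

lemma exists_forward_arc (hwf : WellFounded G.step) (hX : X ≠ Set.univ)
    (hsource : ∀ v, G.InDegZero v → v ∈ X) : ∃ a, (G.mu a).1 ∈ X ∧ (G.mu a).2 ∉ X := by
  obtain ⟨m, hm, hmin⟩ := hwf.has_min Xᶜ (Set.nonempty_compl.mpr hX)
  obtain ⟨a, rfl⟩ := exists_arc_head_eq hsource hm
  exact ⟨a, by_contra fun h => hmin _ h ⟨a, rfl⟩, hm⟩

lemma exists_inter_arc_of_arc (hsync : SyncOnlyAcross G X)
    (hnoback : ∀ a, (G.mu a).2 ∈ X → (G.mu a).1 ∈ X) (a : A) :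
    ∃ x, ((G.contract Xᶜ).inter (G.contract X)).mu x =
        (embed X (G.mu a).1, embed X (G.mu a).2) ∧
      ((G.contract Xᶜ).inter (G.contract X)).lab x = G.lab a := by
  by_cases h₁ : (G.mu a).1 ∈ X <;> by_cases h₂ : (G.mu a).2 ∈ X
  · refine ⟨Sum.inl ⟨(Quotient.mk _ ⟨a, fun h => h.1 h₁⟩, Sum.inr ()),
      not_hasLab_contract_of_mem hsync h₁ h₂⟩, ?_, rfl⟩
    show ((cMap Xᶜ (G.mu a).1, Sum.inr ()), (cMap Xᶜ (G.mu a).2, Sum.inr ())) = _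
    rw [embed, embed, cMap_of_mem h₁, cMap_of_mem h₂]
    rfl
  · exact ⟨Sum.inr (Sum.inr ⟨(Quotient.mk _ ⟨a, fun h => h.1 h₁⟩,
      Quotient.mk _ ⟨a, fun h => h₂ h.2⟩), rfl⟩), rfl, rfl⟩
  · exact absurd (hnoback a h₂) h₁
  · refine ⟨Sum.inr (Sum.inl ⟨(Sum.inr (), Quotient.mk _ ⟨a, fun h => h₁ h.1⟩),
      not_hasLab_contract_compl_of_notMem hsync h₁ h₂⟩), ?_, rfl⟩
    show ((Sum.inr (), cMap X (G.mu a).1), (Sum.inr (), cMap X (G.mu a).2)) = _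
    rw [embed, embed, cMap_of_mem (show (G.mu a).1 ∈ Xᶜ from h₁),
      cMap_of_mem (show (G.mu a).2 ∈ Xᶜ from h₂)]
    rfl

lemma exists_arc_of_inter_arc
    (hbip : ∀ a b : A, G.IsCrossing X a → G.IsCrossing X b → G.lab a = G.lab b →
      ∃ c : A, G.mu c = ((G.mu a).1, (G.mu b).2) ∧ G.lab c = G.lab a)
    (hsync : SyncOnlyAcross G X) (hnoback : ∀ a, (G.mu a).2 ∈ X → (G.mu a).1 ∈ X) {u v : V}
    (x : InterArc (G.contract Xᶜ) (G.contract X))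
    (hx : ((G.contract Xᶜ).inter (G.contract X)).mu x = (embed X u, embed X v)) :
    ∃ a, G.mu a = (u, v) ∧ G.lab a = ((G.contract Xᶜ).inter (G.contract X)).lab x := by
  rcases inter_arc_cases hsync hnoback x with
    ⟨a, w, h₁, h₂, hmu, hlab⟩ | ⟨a, w, h₁, h₂, hmu, hlab⟩ |
    ⟨a, b, ha₁, ha₂, hb₁, hb₂, hab, hmu, hlab⟩
  · rw [hmu] at hx
    have hu := eq_of_cMap_eq (congrArg (·.1.1) hx) (Set.notMem_compl_iff.mpr h₁)
    have hv := eq_of_cMap_eq (congrArg (·.2.1) hx) (Set.notMem_compl_iff.mpr h₂)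
    exact ⟨a, Prod.ext hu hv, hlab.symm⟩
  · rw [hmu] at hx
    have hu := eq_of_cMap_eq (congrArg (·.1.2) hx) h₁
    have hv := eq_of_cMap_eq (congrArg (·.2.2) hx) h₂
    exact ⟨a, Prod.ext hu hv, hlab.symm⟩
  · rw [hmu, Prod.mk.injEq] at hx
    obtain ⟨c, hc, hlabc⟩ := hbip a b (Or.inl ⟨ha₁, ha₂⟩) (Or.inl ⟨hb₁, hb₂⟩) hab
    rw [embed_injective hx.1, embed_injective hx.2] at hc
    exact ⟨c, hc, hlabc.trans hlab.symm⟩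

lemma exists_arc_iff_exists_inter_arc
    (hbip : ∀ a b : A, G.IsCrossing X a → G.IsCrossing X b → G.lab a = G.lab b →
      ∃ c : A, G.mu c = ((G.mu a).1, (G.mu b).2) ∧ G.lab c = G.lab a)
    (hsync : SyncOnlyAcross G X) (hnoback : ∀ a, (G.mu a).2 ∈ X → (G.mu a).1 ∈ X)
    (u v : V) (ℓ : L) :
    (∃ a, G.mu a = (u, v) ∧ G.lab a = ℓ) ↔
      ∃ x, ((G.contract Xᶜ).inter (G.contract X)).mu x = (embed X u, embed X v) ∧
        ((G.contract Xᶜ).inter (G.contract X)).lab x = ℓ := by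
  constructor
  · rintro ⟨a, ha, rfl⟩
    obtain ⟨x, hx, hlab⟩ := exists_inter_arc_of_arc hsync hnoback a
    exact ⟨x, by rw [hx, ha], hlab⟩
  · rintro ⟨x, hx, rfl⟩
    exact exists_arc_of_inter_arc hbip hsync hnoback x hx

lemma not_posLevelBox_embed (hsource : ∀ v, G.InDegZero v → v ∈ X)
    (hnoback : ∀ a, (G.mu a).2 ∈ X → (G.mu a).1 ∈ X) {v : V} (hv : G.InDegZero v) :
    ¬ PosLevelBox (G.contract Xᶜ) (G.contract X) (embed X v) := by
  have hvX : v ∈ X := hsource v hv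
  rintro ⟨x, hq⟩
  rcases x with ⟨q, w⟩ | ⟨w, q⟩
  · obtain ⟨⟨a, _⟩, rfl⟩ := Quotient.exists_rep q
    have h : cMap Xᶜ v = cMap Xᶜ (G.mu a).2 := (congrArg Prod.fst hq).symm
    exact hv a (eq_of_cMap_eq h (Set.notMem_compl_iff.mpr hvX)).symm
  · obtain ⟨⟨a, ha⟩, rfl⟩ := Quotient.exists_rep q
    have h : cMap X (G.mu a).2 = Sum.inr () := (congrArg Prod.snd hq).trans (cMap_of_mem hvX)
    have h₂ := cMap_eq_inr_iff.mp h
    exact ha ⟨hnoback a h₂, h₂⟩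

lemma embed_notMem_vrspRemoved (hsync : SyncOnlyAcross G X)
    (hnoback : ∀ a, (G.mu a).2 ∈ X → (G.mu a).1 ∈ X) (hsource : ∀ v, G.InDegZero v → v ∈ X)
    (v : V) : embed X v ∉ vrspRemoved (G.contract Xᶜ) (G.contract X) := by
  refine Set.disjoint_left.mp (disjoint_vrspRemoved ?_) (Set.mem_range_self v)
  rintro _ ⟨w, rfl⟩ hpos
  obtain ⟨a, rfl⟩ : ∃ a, (G.mu a).2 = w := by
    by_contra! h
    exact not_posLevelBox_embed hsource hnoback h hpos
  obtain ⟨x, hx, -⟩ := exists_inter_arc_of_arc hsync hnoback a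
  exact ⟨x, by rw [hx], by rw [hx]; exact Set.mem_range_self _⟩

lemma inl_inl_mem_vrspRemoved [Finite V] (hwf : WellFounded G.step) (hsync : SyncOnlyAcross G X)
    (hnoback : ∀ a, (G.mu a).2 ∈ X → (G.mu a).1 ∈ X) (hsource : ∀ v, G.InDegZero v → v ∈ X)
    {v w : V} (hv : v ∉ Xᶜ) (hw : w ∉ X) :
    ((Sum.inl ⟨v, hv⟩, Sum.inl ⟨w, hw⟩) : CVertex Xᶜ × CVertex X) ∈
      vrspRemoved (G.contract Xᶜ) (G.contract X) := by
  induction v using hwf.induction generalizing w with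
  | _ v ihv =>
  induction w using hwf.induction with
  | _ w ihw =>
  apply mem_vrspRemoved_of_forall
  · obtain ⟨a, rfl⟩ := exists_arc_head_eq hsource hw
    refine ⟨Sum.inr ((Sum.inl ⟨v, hv⟩ : CVertex Xᶜ), Quotient.mk _ ⟨a, fun h => hw h.2⟩), ?_⟩
    show ((Sum.inl ⟨v, hv⟩ : CVertex Xᶜ), cMap X (G.mu a).2) = _
    rw [cMap_of_notMem hw]
    rfl
  · intro x hx
    rcases inter_arc_cases hsync hnoback x with
      ⟨a, u, h₁, -, hmu, -⟩ | ⟨a, u, h₁, -, hmu, -⟩ | ⟨a, b, -, -, -, hb₂, -, hmu, -⟩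
    · rw [hmu] at hx ⊢
      obtain ⟨ha, rfl⟩ := Prod.mk.inj hx
      rw [cMap_of_notMem (Set.notMem_compl_iff.mpr h₁)]
      exact ihv _ ⟨a, Prod.ext rfl (eq_of_cMap_eq_inl ha)⟩ _ hw
    · rw [hmu] at hx ⊢
      obtain ⟨rfl, ha⟩ := Prod.mk.inj hx
      rw [cMap_of_notMem h₁]
      exact ihw _ ⟨a, Prod.ext rfl (eq_of_cMap_eq_inl ha)⟩ h₁
    · rw [hmu] at hx
      have h : cMap Xᶜ (G.mu b).2 = Sum.inl ⟨v, hv⟩ := congrArg Prod.fst hx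
      rw [cMap_of_mem (show (G.mu b).2 ∈ Xᶜ from hb₂)] at h
      cases h

lemma inr_inr_mem_vrspRemoved [Finite V] (hwf : WellFounded G.step) (hX : X ≠ Set.univ)
    (hsync : SyncOnlyAcross G X) (hnoback : ∀ a, (G.mu a).2 ∈ X → (G.mu a).1 ∈ X)
    (hsource : ∀ v, G.InDegZero v → v ∈ X) :
    ((Sum.inr (), Sum.inr ()) : CVertex Xᶜ × CVertex X) ∈
      vrspRemoved (G.contract Xᶜ) (G.contract X) := by
  apply mem_vrspRemoved_of_forall
  · obtain ⟨a, ha₁, ha₂⟩ := exists_forward_arc hwf hX hsource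
    refine ⟨Sum.inl (Quotient.mk _ ⟨a, fun h => h.1 ha₁⟩, Sum.inr ()), ?_⟩
    show (cMap Xᶜ (G.mu a).2, Sum.inr ()) = _
    rw [cMap_of_mem (show (G.mu a).2 ∈ Xᶜ from ha₂)]
    rfl
  · intro x hx
    exfalso
    rcases inter_arc_cases hsync hnoback x with
      ⟨a, u, -, h₂, hmu, -⟩ | ⟨a, u, -, h₂, hmu, -⟩ | ⟨a, b, -, -, -, hb₂, -, hmu, -⟩ <;>
      rw [hmu] at hx
    · exact cMap_eq_inr_iff.mp (congrArg Prod.fst hx) h₂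
    · exact h₂ (cMap_eq_inr_iff.mp (congrArg Prod.snd hx))
    · exact hb₂ (cMap_eq_inr_iff.mp (congrArg Prod.snd hx))

lemma exists_embed_eq_of_notMem_vrspRemoved [Finite V] (hwf : WellFounded G.step)
    (hX : X ≠ Set.univ) (hsync : SyncOnlyAcross G X)
    (hnoback : ∀ a, (G.mu a).2 ∈ X → (G.mu a).1 ∈ X) (hsource : ∀ v, G.InDegZero v → v ∈ X)
    {p : CVertex Xᶜ × CVertex X}
    (hp : p ∉ vrspRemoved (G.contract Xᶜ) (G.contract X)) : ∃ v, embed X v = p := by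
  rcases p with ⟨⟨v, hv⟩ | ⟨⟩, ⟨w, hw⟩ | ⟨⟩⟩
  · exact absurd (inl_inl_mem_vrspRemoved hwf hsync hnoback hsource hv hw) hp
  · exact ⟨v, by rw [embed, cMap_of_notMem hv, cMap_of_mem (Set.notMem_compl_iff.mp hv)]⟩
  · exact ⟨w, by rw [embed, cMap_of_mem (show w ∈ Xᶜ from hw), cMap_of_notMem hw]⟩
  · exact absurd (inr_inr_mem_vrspRemoved hwf hX hsync hnoback hsource) hp

end Decomposition

end LDMG

theorem decomposition_one_general {V A L : Type} [Fintype V]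
    (G : LDMG V A L) (hacyc : G.Acyclic)
    (X Y : Set V) (hXproper : X ≠ Set.univ) (hY : Y = Xᶜ)
    -- (i) equally-labelled arcs of [X,Y] arc-induce a complete bipartite subgraph
    (hbip : ∀ a b : A,
      (((G.mu a).1 ∈ X ∧ (G.mu a).2 ∈ Y) ∨ ((G.mu a).1 ∈ Y ∧ (G.mu a).2 ∈ X)) →
      (((G.mu b).1 ∈ X ∧ (G.mu b).2 ∈ Y) ∨ ((G.mu b).1 ∈ Y ∧ (G.mu b).2 ∈ X)) →
      G.lab a = G.lab b →
      ∃ c : A, G.mu c = ((G.mu a).1, (G.mu b).2) ∧ G.lab c = G.lab a)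
    -- (ii) the arcs coming from [X,Y] are the only synchronising arcs of G/X and G/Y
    (hsync : ∀ a b : A,
      ¬ ((G.mu a).1 ∈ X ∧ (G.mu a).2 ∈ X) → ¬ ((G.mu b).1 ∈ Y ∧ (G.mu b).2 ∈ Y) →
      G.lab a = G.lab b →
      ((((G.mu a).1 ∈ X ∧ (G.mu a).2 ∈ Y) ∨ ((G.mu a).1 ∈ Y ∧ (G.mu a).2 ∈ X)) ∧
       (((G.mu b).1 ∈ X ∧ (G.mu b).2 ∈ Y) ∨ ((G.mu b).1 ∈ Y ∧ (G.mu b).2 ∈ X))))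
    -- (iii) S'(G) ⊆ X
    (hsource : ∀ v : V, G.InDegZero v → v ∈ X)
    -- (iv) [X,Y] has no backward arcs
    (hnoback : ∀ a : A, (G.mu a).2 ∈ X → (G.mu a).1 ∈ X) :
    ∃ φ : V ≃ LDMG.VrspV (G.contract Y) (G.contract X),
      (∀ v : V, (Subtype.val (φ v) : LDMG.CVertex Y × LDMG.CVertex X) = (LDMG.cMap Y v, LDMG.cMap X v)) ∧
      (∀ (u v : V) (ℓ : L),
        (∃ a, G.mu a = (u, v) ∧ G.lab a = ℓ) ↔
        (∃ b, ((G.contract Y).vrsp (G.contract X)).mu b = (φ u, φ v) ∧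
          ((G.contract Y).vrsp (G.contract X)).lab b = ℓ)) := by
  subst hY
  have hwf := hacyc.wellFounded
  have hsurv := LDMG.embed_notMem_vrspRemoved hsync hnoback hsource
  have hbij : Function.Bijective fun v =>
      (⟨LDMG.embed X v, hsurv v⟩ : LDMG.VrspV (G.contract Xᶜ) (G.contract X)) := by
    refine ⟨fun u v h => LDMG.embed_injective (congrArg Subtype.val h), fun p => ?_⟩
    obtain ⟨v, hv⟩ :=
      LDMG.exists_embed_eq_of_notMem_vrspRemoved hwf hXproper hsync hnoback hsource p.2
    exact ⟨v, Subtype.ext hv⟩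
  refine ⟨Equiv.ofBijective _ hbij, fun v => rfl, fun u v ℓ => ?_⟩
  exact (LDMG.exists_arc_iff_exists_inter_arc hbip hsync hnoback u v ℓ).trans
    (LDMG.exists_vrsp_arc_iff (hsurv u) (hsurv v) ℓ).symm

/-- First decomposition theorem (relaxed): if each largest set of equally-labelled arcs
of `[X,Y]` arc-induces a complete bipartite subgraph of `G`, the arcs of `G/X` and `G/Y`
coming from `[X,Y]` are the only synchronising arcs, all in-degree-0 vertices of `G` lie
in `X`, and `[X,Y]` has no backward arcs, then `G ≅ (G/Y) ⊟ (G/X)` via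
`v ∈ X ↦ (v, x̃)`, `w ∈ Y ↦ (ỹ, w)`. -/
theorem decomposition_one {V A L : Type} [Fintype V] [Fintype A]
    (G : LDMG V A L) (hacyc : G.Acyclic)
    (X Y : Set V) (hXne : X.Nonempty) (hXproper : X ≠ Set.univ) (hY : Y = Xᶜ)
    -- (i) equally-labelled arcs of [X,Y] arc-induce a complete bipartite subgraph
    (hbip : ∀ a b : A,
      (((G.mu a).1 ∈ X ∧ (G.mu a).2 ∈ Y) ∨ ((G.mu a).1 ∈ Y ∧ (G.mu a).2 ∈ X)) →
      (((G.mu b).1 ∈ X ∧ (G.mu b).2 ∈ Y) ∨ ((G.mu b).1 ∈ Y ∧ (G.mu b).2 ∈ X)) →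
      G.lab a = G.lab b →
      ∃ c : A, G.mu c = ((G.mu a).1, (G.mu b).2) ∧ G.lab c = G.lab a)
    -- (ii) the arcs coming from [X,Y] are the only synchronising arcs of G/X and G/Y
    (hsync : ∀ a b : A,
      ¬ ((G.mu a).1 ∈ X ∧ (G.mu a).2 ∈ X) → ¬ ((G.mu b).1 ∈ Y ∧ (G.mu b).2 ∈ Y) →
      G.lab a = G.lab b →
      ((((G.mu a).1 ∈ X ∧ (G.mu a).2 ∈ Y) ∨ ((G.mu a).1 ∈ Y ∧ (G.mu a).2 ∈ X)) ∧
       (((G.mu b).1 ∈ X ∧ (G.mu b).2 ∈ Y) ∨ ((G.mu b).1 ∈ Y ∧ (G.mu b).2 ∈ X))))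
    -- (iii) S'(G) ⊆ X
    (hsource : ∀ v : V, G.InDegZero v → v ∈ X)
    -- (iv) [X,Y] has no backward arcs
    (hnoback : ∀ a : A, (G.mu a).2 ∈ X → (G.mu a).1 ∈ X) :
    ∃ φ : V ≃ LDMG.VrspV (G.contract Y) (G.contract X),
      (∀ v : V, (Subtype.val (φ v) : LDMG.CVertex Y × LDMG.CVertex X) = (LDMG.cMap Y v, LDMG.cMap X v)) ∧
      (∀ (u v : V) (ℓ : L),
        (∃ a, G.mu a = (u, v) ∧ G.lab a = ℓ) ↔
        (∃ b, ((G.contract Y).vrsp (G.contract X)).mu b = (φ u, φ v) ∧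
          ((G.contract Y).vrsp (G.contract X)).lab b = ℓ)) :=
  decomposition_one_general G hacyc X Y hXproper hY hbip hsync hsource hnoback
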